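/- arXiv:1201.5090 — 4 statements merged into one kernel-verified Lean document; each statement's English description precedes it below -/
import Mathlib

section
/- Let $P \subseteq \mathbb{R}^{d_1}$ and $Q \subseteq \mathbb{R}^{d_2}$ be compact convex sets each containing the origin. Then the Lebesgue measure in $\mathbb{R}^{d_1+d_2}$ of the convex hull of $(P \times \{0\}) \cup (\{0\} \times Q)$ equals $\dfrac{d_1!\, d_2!}{(d_1+d_2)!}\, \lambda_{d_1}(P)\, \lambda_{d_2}(Q)$. -/
/-!
Let `m(x)` be the least `r ∈ [0, 1]` with `x ∈ r • P`. The join of `P × {0}` and `{0} × Q` consists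
of the points `((1 - t) • p, t • q)`, so its slice over `x ∈ P` is `(1 - m(x)) • Q`, of measure
`(1 - m(x))^{d₂} λ(Q)`. The sublevel sets `{m ≤ c}` are the dilates `c • P`, of measure
`c^{d₁} λ(P)`, so the layer-cake formula turns `∫_P (1 - m)^{d₂}` into the Beta integral
`λ(P) ∫₀¹ d₂ t^{d₂-1} (1 - t)^{d₁} dt = d₁! d₂! / (d₁ + d₂)! · λ(P)`.
-/

open MeasureTheory Set
open scoped Pointwise Nat

section Module

variable {E F : Type*} [AddCommGroup E] [Module ℝ E] [AddCommGroup F] [Module ℝ F]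
  {P : Set E} {Q : Set F}

theorem StarConvex.smul_set_subset_smul_set_of_le (hP : StarConvex ℝ 0 P) {s t : ℝ}
    (hs : 0 ≤ s) (hst : s ≤ t) : s • P ⊆ t • P := by
  rcases (hs.trans hst).eq_or_lt with rfl | ht
  · rw [le_antisymm hst hs]
  · rintro _ ⟨p, hp, rfl⟩
    refine ⟨(s / t) • p, hP.smul_mem hp (div_nonneg hs ht.le) (div_le_one_of_le₀ hst ht.le), ?_⟩
    dsimp only
    rw [smul_smul, mul_div_cancel₀ _ ht.ne']

theorem StarConvex.smul_set_subset (hP : StarConvex ℝ 0 P) {t : ℝ} (ht₀ : 0 ≤ t) (ht₁ : t ≤ 1) :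
    t • P ⊆ P := by
  simpa using hP.smul_set_subset_smul_set_of_le ht₀ ht₁

theorem convexJoin_prod_zero_eq_image (P : Set E) (Q : Set F) :
    convexJoin ℝ (P ×ˢ {0}) ({0} ×ˢ Q) =
      (fun w : ℝ × E × F ↦ ((1 - w.1) • w.2.1, w.1 • w.2.2)) '' Icc 0 1 ×ˢ P ×ˢ Q := by
  ext ⟨x, y⟩
  simp only [mem_convexJoin, segment_eq_image, mem_image, mem_prod, mem_singleton_iff, Prod.ext_iff]
  constructor
  · rintro ⟨a, ⟨ha, ha0⟩, b, ⟨hb0, hb⟩, t, ht, hx, hy⟩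
    refine ⟨(t, a.1, b.2), ⟨ht, ha, hb⟩, ?_, ?_⟩ <;> simp_all
  · rintro ⟨⟨t, p, q⟩, ⟨ht, hp, hq⟩, hx, hy⟩
    exact ⟨(p, 0), ⟨hp, rfl⟩, (0, q), ⟨rfl, hq⟩, t, ht, by simpa using hx, by simpa using hy⟩

end Module

section MinScale

variable {E : Type*} [NormedAddCommGroup E] [NormedSpace ℝ E] {P : Set E} {x : E} {c : ℝ}

/-- The inserted `1` makes this `1`, rather than the junk value `sInf ∅ = 0`, when no `r` works;
this is what makes `{x | minScale P x ≤ c} = c • P` hold for all `c < 1`. -/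
noncomputable def minScale (P : Set E) (x : E) : ℝ :=
  sInf (insert 1 {r ∈ Icc (0 : ℝ) 1 | x ∈ r • P})

theorem minScale_nonneg (P : Set E) (x : E) : 0 ≤ minScale P x :=
  le_csInf (insert_nonempty _ _) <| forall_mem_insert.2 ⟨zero_le_one, fun _ hr ↦ hr.1.1⟩

theorem minScale_le_one (P : Set E) (x : E) : minScale P x ≤ 1 :=
  csInf_le ⟨0, forall_mem_insert.2 ⟨zero_le_one, fun _ hr ↦ hr.1.1⟩⟩ (mem_insert _ _)

theorem minScale_le {r : ℝ} (hr : r ∈ Icc (0 : ℝ) 1) (hx : x ∈ r • P) : minScale P x ≤ r :=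
  csInf_le ⟨0, forall_mem_insert.2 ⟨zero_le_one, fun _ hr ↦ hr.1.1⟩⟩ (mem_insert_of_mem _ ⟨hr, hx⟩)

theorem minScale_eq_one_or_mem_smul (hPc : IsCompact P) (x : E) :
    minScale P x = 1 ∨ x ∈ minScale P x • P := by
  have hcompact : IsCompact {r ∈ Icc (0 : ℝ) 1 | x ∈ r • P} := by
    have : {r ∈ Icc (0 : ℝ) 1 | x ∈ r • P} =
        Prod.fst '' ((Icc 0 1 ×ˢ P) ∩ {w : ℝ × E | w.1 • w.2 = x}) := by
      ext r
      simp [mem_smul_set, and_assoc]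
    rw [this]
    exact ((isCompact_Icc.prod hPc).inter_right
      (isClosed_eq (by fun_prop) continuous_const)).image continuous_fst
  exact (hcompact.insert 1).sInf_mem (insert_nonempty _ _) |>.imp id (·.2)

theorem mem_minScale_smul (hPc : IsCompact P) (hx : x ∈ P) : x ∈ minScale P x • P := by
  rcases minScale_eq_one_or_mem_smul hPc x with h | h
  · rwa [h, one_smul]
  · exact h

theorem minScale_le_iff (hP : StarConvex ℝ 0 P) (hPc : IsCompact P) (hc₀ : 0 ≤ c) (hc₁ : c < 1) :
    minScale P x ≤ c ↔ x ∈ c • P := by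
  refine ⟨fun hle ↦ ?_, minScale_le ⟨hc₀, hc₁.le⟩⟩
  rcases minScale_eq_one_or_mem_smul hPc x with h | h
  · linarith
  · exact hP.smul_set_subset_smul_set_of_le (minScale_nonneg P x) hle h

theorem measurable_minScale [MeasurableSpace E] [BorelSpace E] (hP : StarConvex ℝ 0 P)
    (hPc : IsCompact P) : Measurable (minScale P) := by
  refine measurable_of_Iic fun c ↦ ?_
  rcases lt_or_ge c 0 with hc₀ | hc₀
  · convert MeasurableSet.empty
    exact eq_empty_of_forall_notMem fun x hx ↦ (minScale_nonneg P x).not_gt (hx.trans_lt hc₀)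
  rcases lt_or_ge c 1 with hc₁ | hc₁
  · have : minScale P ⁻¹' Iic c = c • P := ext fun x ↦ minScale_le_iff hP hPc hc₀ hc₁
    exact this ▸ (hPc.smul c).measurableSet
  · convert MeasurableSet.univ
    exact eq_univ_of_forall fun x ↦ (minScale_le_one P x).trans hc₁

end MinScale

theorem integral_pow_mul_one_sub_pow_succ_right (a b : ℕ) :
    (a + 1 : ℝ) * ∫ t in (0 : ℝ)..1, t ^ a * (1 - t) ^ (b + 1) =
      (b + 1) * ∫ t in (0 : ℝ)..1, t ^ (a + 1) * (1 - t) ^ b := by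
  have hderiv : ∀ t ∈ uIcc (0 : ℝ) 1, HasDerivAt (fun s : ℝ ↦ s ^ (a + 1) * (1 - s) ^ (b + 1))
      ((a + 1) * (t ^ a * (1 - t) ^ (b + 1)) - (b + 1) * (t ^ (a + 1) * (1 - t) ^ b)) t := by
    intro t _
    have hpow : HasDerivAt (fun s : ℝ ↦ s ^ (a + 1)) ((a + 1) * t ^ a) t := by
      simpa using hasDerivAt_pow (a + 1) t
    have hpow' : HasDerivAt (fun s : ℝ ↦ (1 - s) ^ (b + 1)) ((b + 1) * (1 - t) ^ b * -1) t := by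
      simpa using ((hasDerivAt_id t).const_sub 1).fun_pow (b + 1)
    exact (hpow.fun_mul hpow').congr_deriv (by ring)
  have hint : ∀ {m n : ℕ}, IntervalIntegrable (fun t : ℝ ↦ t ^ m * (1 - t) ^ n) volume 0 1 :=
    (Continuous.intervalIntegrable (by fun_prop) _ _)
  have hftc := intervalIntegral.integral_eq_sub_of_hasDerivAt hderiv
    ((hint.const_mul _).sub (hint.const_mul _))
  rw [intervalIntegral.integral_sub (hint.const_mul _) (hint.const_mul _),
    intervalIntegral.integral_const_mul, intervalIntegral.integral_const_mul] at hftc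
  -- both boundary terms of the FTC vanish
  norm_num at hftc
  linarith

theorem integral_pow_mul_one_sub_pow (a b : ℕ) :
    ∫ t in (0 : ℝ)..1, t ^ a * (1 - t) ^ b = (a ! * b ! / (a + b + 1)! : ℝ) := by
  induction b generalizing a with
  | zero => simp [integral_pow, Nat.factorial_succ, field]
  | succ b ih =>
    have hrec := integral_pow_mul_one_sub_pow_succ_right a b
    rw [ih (a + 1), show a + 1 + b + 1 = a + (b + 1) + 1 by omega] at hrec
    rw [← mul_right_inj' (show (a + 1 : ℝ) ≠ 0 by positivity), hrec, Nat.factorial_succ a,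
      Nat.factorial_succ b]
    push_cast
    ring

theorem integral_one_sub_pow_mul_succ_mul_pow (n e : ℕ) :
    ∫ t in (0 : ℝ)..1, (1 - t) ^ n * ((e + 1 : ℝ) * t ^ e) =
      (n ! * (e + 1)! / (n + (e + 1))! : ℝ) := by
  have hcomm : ∫ t in (0 : ℝ)..1, (1 - t) ^ n * ((e + 1 : ℝ) * t ^ e) =
      (e + 1) * ∫ t in (0 : ℝ)..1, t ^ e * (1 - t) ^ n := by
    rw [← intervalIntegral.integral_const_mul]
    congr 1 with t
    ring
  rw [hcomm, integral_pow_mul_one_sub_pow, show e + n + 1 = n + (e + 1) by omega,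
    Nat.factorial_succ e]
  push_cast
  ring

section Slices

variable {E F : Type*} [NormedAddCommGroup E] [NormedSpace ℝ E] [NormedAddCommGroup F]
  [NormedSpace ℝ F] {P : Set E} {Q : Set F}

theorem mk_mem_convexJoin_prod_zero_iff (hP : StarConvex ℝ 0 P) (hPc : IsCompact P)
    (hQ : StarConvex ℝ 0 Q) {x : E} {y : F} :
    (x, y) ∈ convexJoin ℝ (P ×ˢ {0}) ({0} ×ˢ Q) ↔ x ∈ P ∧ y ∈ (1 - minScale P x) • Q := by
  rw [convexJoin_prod_zero_eq_image]
  constructor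
  · rintro ⟨⟨t, p, q⟩, ⟨⟨ht₀, ht₁⟩, hp, hq⟩, hxy⟩
    obtain ⟨rfl, rfl⟩ := Prod.ext_iff.1 hxy
    have hx : (1 - t) • p ∈ (1 - t) • P := smul_mem_smul_set hp
    have hle : minScale P ((1 - t) • p) ≤ 1 - t := minScale_le ⟨by linarith, by linarith⟩ hx
    exact ⟨hP.smul_set_subset (by linarith) (by linarith) hx,
      hQ.smul_set_subset_smul_set_of_le ht₀ (by linarith) (smul_mem_smul_set hq)⟩
  · rintro ⟨hx, q, hq, rfl⟩
    obtain ⟨p, hp, hpx⟩ := mem_minScale_smul hPc hx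
    refine ⟨(1 - minScale P x, p, q), ⟨⟨?_, ?_⟩, hp, hq⟩, ?_⟩
    · linarith [minScale_le_one P x]
    · linarith [minScale_nonneg P x]
    · simpa using hpx

theorem isCompact_convexJoin_prod_zero (hPc : IsCompact P) (hQc : IsCompact Q) :
    IsCompact (convexJoin ℝ (P ×ˢ {0}) ({0} ×ˢ Q)) := by
  rw [convexJoin_prod_zero_eq_image]
  exact (isCompact_Icc.prod (hPc.prod hQc)).image (by fun_prop)

variable [FiniteDimensional ℝ F] [MeasurableSpace F] [BorelSpace F] (ν : Measure F)
  [ν.IsAddHaarMeasure]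

theorem measure_preimage_mk_convexJoin_prod_zero (hP : StarConvex ℝ 0 P) (hPc : IsCompact P)
    (hQ : StarConvex ℝ 0 Q) (x : E) :
    ν (Prod.mk x ⁻¹' convexJoin ℝ (P ×ˢ {0}) ({0} ×ˢ Q)) =
      P.indicator (fun x ↦ ENNReal.ofReal ((1 - minScale P x) ^ Module.finrank ℝ F) * ν Q) x := by
  by_cases hx : x ∈ P
  · have hslice : Prod.mk x ⁻¹' convexJoin ℝ (P ×ˢ {0}) ({0} ×ˢ Q) = (1 - minScale P x) • Q :=
      ext fun y ↦ (mk_mem_convexJoin_prod_zero_iff hP hPc hQ).trans (and_iff_right hx)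
    rw [hslice, indicator_of_mem hx,
      ν.addHaar_smul_of_nonneg (sub_nonneg.2 (minScale_le_one P x))]
  · have hslice : Prod.mk x ⁻¹' convexJoin ℝ (P ×ˢ {0}) ({0} ×ˢ Q) = ∅ :=
      eq_empty_of_forall_notMem fun y hy ↦ hx ((mk_mem_convexJoin_prod_zero_iff hP hPc hQ).1 hy).1
    rw [hslice, measure_empty, indicator_of_notMem hx]

end Slices

section LayerCake

variable {E : Type*} [NormedAddCommGroup E] [NormedSpace ℝ E] [FiniteDimensional ℝ E]
  [MeasurableSpace E] [BorelSpace E] (μ : Measure E) [μ.IsAddHaarMeasure] {P : Set E}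

theorem restrict_setOf_le_one_sub_minScale (hP : StarConvex ℝ 0 P) (hPc : IsCompact P) {t : ℝ}
    (ht₀ : 0 < t) (ht₁ : t ≤ 1) :
    μ.restrict P {x | t ≤ 1 - minScale P x} =
      ENNReal.ofReal ((1 - t) ^ Module.finrank ℝ E) * μ P := by
  have hsublevel : {x | t ≤ 1 - minScale P x} = (1 - t) • P :=
    ext fun x ↦ le_sub_comm.trans (minScale_le_iff hP hPc (by linarith) (by linarith))
  rw [Measure.restrict_apply' hPc.measurableSet, hsublevel,
    inter_eq_left.2 (hP.smul_set_subset (by linarith) (by linarith)),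
    μ.addHaar_smul_of_nonneg (by linarith)]

theorem setLIntegral_one_sub_minScale_pow (hP : StarConvex ℝ 0 P) (hPc : IsCompact P) (k : ℕ) :
    ∫⁻ x in P, ENNReal.ofReal ((1 - minScale P x) ^ k) ∂μ =
      ENNReal.ofReal ((Module.finrank ℝ E)! * k ! / (Module.finrank ℝ E + k)! : ℝ) * μ P := by
  set n := Module.finrank ℝ E
  rcases k with _ | e
  · simp [div_self (show (n ! : ℝ) ≠ 0 by positivity)]
  have hpow (x : E) : ENNReal.ofReal ((1 - minScale P x) ^ (e + 1)) =
      ENNReal.ofReal (∫ t in (0 : ℝ)..(1 - minScale P x), (e + 1 : ℝ) * t ^ e) := by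
    simp [integral_pow, mul_div_cancel₀ _ (show (e + 1 : ℝ) ≠ 0 by positivity)]
  have hlayer := lintegral_comp_eq_lintegral_meas_le_mul_of_measurable (μ.restrict P)
    (fun x ↦ sub_nonneg.2 (minScale_le_one P x)) (measurable_const.sub (measurable_minScale hP hPc))
    (g := fun t : ℝ ↦ (e + 1 : ℝ) * t ^ e)
    (fun _ _ ↦ Continuous.intervalIntegrable (by fun_prop) _ _) (by fun_prop)
    (fun t ht ↦ by positivity)
  have hvanish (t : ℝ) (ht : t ∈ Ioi (1 : ℝ)) : μ.restrict P {x | t ≤ 1 - minScale P x} = 0 := by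
    convert measure_empty (μ := μ.restrict P)
    exact eq_empty_of_forall_notMem fun x hx ↦ by
      linarith [minScale_nonneg P x, show (1 : ℝ) < t from ht, show t ≤ 1 - minScale P x from hx]
  calc ∫⁻ x in P, ENNReal.ofReal ((1 - minScale P x) ^ (e + 1)) ∂μ
      = ∫⁻ t in Ioi 0, μ.restrict P {x | t ≤ 1 - minScale P x} *
          ENNReal.ofReal ((e + 1 : ℝ) * t ^ e) := by simp_rw [hpow]; exact hlayer
    _ = ∫⁻ t in Ioc 0 1, ENNReal.ofReal ((1 - t) ^ n * ((e + 1 : ℝ) * t ^ e)) * μ P := by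
      rw [← Ioc_union_Ioi_eq_Ioi zero_le_one,
        lintegral_union measurableSet_Ioi (Ioc_disjoint_Ioi le_rfl),
        setLIntegral_congr_fun measurableSet_Ioi fun t ht ↦ by rw [hvanish t ht, zero_mul],
        lintegral_zero, add_zero]
      refine setLIntegral_congr_fun measurableSet_Ioc fun t ⟨ht₀, ht₁⟩ ↦ ?_
      rw [restrict_setOf_le_one_sub_minScale μ hP hPc ht₀ ht₁,
        ENNReal.ofReal_mul (pow_nonneg (by linarith) n)]
      ring
    _ = ENNReal.ofReal (∫ t in (0 : ℝ)..1, (1 - t) ^ n * ((e + 1 : ℝ) * t ^ e)) * μ P := by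
      rw [lintegral_mul_const _ (by fun_prop), intervalIntegral.integral_of_le zero_le_one,
        ofReal_integral_eq_lintegral_ofReal]
      · exact Continuous.integrableOn_Ioc (by fun_prop)
      · filter_upwards [self_mem_ae_restrict measurableSet_Ioc] with t ⟨ht₀, ht₁⟩
        have : 0 ≤ 1 - t := by linarith
        positivity
    _ = _ := by rw [integral_one_sub_pow_mul_succ_mul_pow]

end LayerCake

theorem addHaar_prod_convexJoin_prod_zero {E F : Type*} [NormedAddCommGroup E] [NormedSpace ℝ E]
    [FiniteDimensional ℝ E] [MeasurableSpace E] [BorelSpace E] [NormedAddCommGroup F]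
    [NormedSpace ℝ F] [FiniteDimensional ℝ F] [MeasurableSpace F] [BorelSpace F]
    (μ : Measure E) [μ.IsAddHaarMeasure] (ν : Measure F) [ν.IsAddHaarMeasure]
    {P : Set E} {Q : Set F} (hP : StarConvex ℝ 0 P) (hPc : IsCompact P)
    (hQ : StarConvex ℝ 0 Q) (hQc : IsCompact Q) :
    μ.prod ν (convexJoin ℝ (P ×ˢ {0}) ({0} ×ˢ Q)) =
      ENNReal.ofReal ((Module.finrank ℝ E)! * (Module.finrank ℝ F)! /
        (Module.finrank ℝ E + Module.finrank ℝ F)! : ℝ) * μ P * ν Q := by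
  rw [Measure.prod_apply (isCompact_convexJoin_prod_zero hPc hQc).measurableSet,
    lintegral_congr (measure_preimage_mk_convexJoin_prod_zero ν hP hPc hQ),
    lintegral_indicator hPc.measurableSet,
    lintegral_mul_const' _ _ hQc.measure_lt_top.ne,
    setLIntegral_one_sub_minScale_pow μ hP hPc]

/-- For compact convex sets `P ⊆ ℝ^{d₁}` and `Q ⊆ ℝ^{d₂}` containing the origin, the
Lebesgue measure of the convex hull of `(P × {0}) ∪ ({0} × Q)` in `ℝ^{d₁+d₂}` equals
`(d₁! d₂! / (d₁+d₂)!) · λ(P) · λ(Q)`. -/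
theorem volume_convexHull_union_prod {d₁ d₂ : ℕ}
    (P : Set (Fin d₁ → ℝ)) (Q : Set (Fin d₂ → ℝ))
    (hPc : IsCompact P) (hPconv : Convex ℝ P) (hP0 : (0 : Fin d₁ → ℝ) ∈ P)
    (hQc : IsCompact Q) (hQconv : Convex ℝ Q) (hQ0 : (0 : Fin d₂ → ℝ) ∈ Q) :
    (volume (convexHull ℝ ((P ×ˢ ({0} : Set (Fin d₂ → ℝ))) ∪
        (({0} : Set (Fin d₁ → ℝ)) ×ˢ Q)))).toReal =
      ((Nat.factorial d₁ : ℝ) * (Nat.factorial d₂ : ℝ) / (Nat.factorial (d₁ + d₂) : ℝ)) *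
        (volume P).toReal * (volume Q).toReal := by
  have hhull : convexHull ℝ ((P ×ˢ ({0} : Set (Fin d₂ → ℝ))) ∪ (({0} : Set (Fin d₁ → ℝ)) ×ˢ Q)) =
      convexJoin ℝ (P ×ˢ {0}) ({0} ×ˢ Q) := by
    rw [convexHull_union (nonempty_of_mem hP0 |>.prod (singleton_nonempty 0))
      ((singleton_nonempty 0).prod (nonempty_of_mem hQ0)),
      (hPconv.prod (convex_singleton 0)).convexHull_eq,
      ((convex_singleton 0).prod hQconv).convexHull_eq]
  rw [hhull, Measure.volume_eq_prod, addHaar_prod_convexJoin_prod_zero volume volume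
    (hPconv.starConvex hP0) hPc (hQconv.starConvex hQ0) hQc]
  simp only [Module.finrank_fin_fun, ENNReal.toReal_mul]
  rw [ENNReal.toReal_ofReal (by positivity)]
end

section
/- Let $S \subseteq \mathbb{Z}^2$ be the additive submonoid generated by the five vectors $(1,0), (2,0), (2,1), (2,3), (2,4)$ (the columns of $\hat{A}_{(2)}$). Then $\hat{\beta}_{(2)} = (3,2)$ is a hole of $S$: namely $(3,2) \notin S$, and for every $s \in S$ with $s \ne 0$ one has $(3,2) + s \in S$. -/
/-- `(3,2)` is a hole of the submonoid of `ℤ²` generated by the columns of `Â₍₂₎`,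
namely `(1,0), (2,0), (2,1), (2,3), (2,4)`. -/
theorem beta_hat_two_is_hole :
    let S : AddSubmonoid (ℤ × ℤ) :=
      AddSubmonoid.closure {(1, 0), (2, 0), (2, 1), (2, 3), (2, 4)}
    ((3, 2) : ℤ × ℤ) ∉ S ∧ ∀ s ∈ S, s ≠ 0 → ((3, 2) : ℤ × ℤ) + s ∈ S := by
  intro S
  have m1 : ((1, 0) : ℤ × ℤ) ∈ S := AddSubmonoid.subset_closure (by norm_num)
  have m2 : ((2, 0) : ℤ × ℤ) ∈ S := AddSubmonoid.subset_closure (by norm_num)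
  have m3 : ((2, 1) : ℤ × ℤ) ∈ S := AddSubmonoid.subset_closure (by norm_num)
  have m4 : ((2, 3) : ℤ × ℤ) ∈ S := AddSubmonoid.subset_closure (by norm_num)
  have m5 : ((2, 4) : ℤ × ℤ) ∈ S := AddSubmonoid.subset_closure (by norm_num)
  have hinv : ∀ p ∈ S, 0 ≤ p.1 ∧ 0 ≤ p.2 ∧ (p.2 = 1 → 2 ≤ p.1) ∧ (p.2 = 2 → 4 ≤ p.1) := by
    intro p hp
    refine AddSubmonoid.closure_induction (fun g hg => ?_) (by norm_num)
      (fun x y hx hy ihx ihy => ?_) hp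
    · rcases hg with h | h | h | h | h <;> subst h <;> norm_num
    · obtain ⟨hx1, hx2, hx3, hx4⟩ := ihx
      obtain ⟨hy1, hy2, hy3, hy4⟩ := ihy
      refine ⟨by simpa using add_nonneg hx1 hy1, by simpa using add_nonneg hx2 hy2, ?_, ?_⟩
      · intro h
        simp only [Prod.fst_add, Prod.snd_add] at h ⊢
        omega
      · intro h
        simp only [Prod.fst_add, Prod.snd_add] at h ⊢
        omega
  have hstep : ∀ p ∈ S, p = 0 ∨ ((3, 2) : ℤ × ℤ) + p ∈ S := by
    intro p hp
    refine AddSubmonoid.closure_induction (fun g hg => Or.inr ?_) (Or.inl rfl)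
      (fun x y hx hy ihx ihy => ?_) hp
    · rcases hg with h | h | h | h | h <;> subst h
      · have h1 : ((3, 2) : ℤ × ℤ) + (1, 0) = (2, 1) + (2, 1) := by norm_num
        rw [h1]; exact S.add_mem m3 m3
      · have h1 : ((3, 2) : ℤ × ℤ) + (2, 0) = (1, 0) + ((2, 1) + (2, 1)) := by norm_num
        rw [h1]; exact S.add_mem m1 (S.add_mem m3 m3)
      · have h1 : ((3, 2) : ℤ × ℤ) + (2, 1) = (1, 0) + ((2, 0) + (2, 3)) := by norm_num
        rw [h1]; exact S.add_mem m1 (S.add_mem m2 m4)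
      · have h1 : ((3, 2) : ℤ × ℤ) + (2, 3) = (1, 0) + ((2, 1) + (2, 4)) := by norm_num
        rw [h1]; exact S.add_mem m1 (S.add_mem m3 m5)
      · have h1 : ((3, 2) : ℤ × ℤ) + (2, 4) = (1, 0) + ((2, 3) + (2, 3)) := by norm_num
        rw [h1]; exact S.add_mem m1 (S.add_mem m4 m4)
    · rcases ihx with rfl | hx'
      · simpa using ihy
      rcases ihy with rfl | hy'
      · simpa using Or.inr hx'
      · right
        have : ((3, 2) : ℤ × ℤ) + (x + y) = (((3, 2) : ℤ × ℤ) + x) + y := by ring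
        rw [this]; exact S.add_mem hx' hy
  constructor
  · intro h
    have := hinv _ h
    norm_num at this
  · intro s hs hne
    rcases hstep s hs with rfl | h
    · exact absurd rfl hne
    · exact h
end

section
/- Let $S \subseteq \mathbb{Z}^3$ be the additive submonoid generated by the seven vectors $(1,0,0), (2,0,0), (2,0,1), (2,0,3), (2,0,4), (2,1,0), (2,1,1)$ (the columns of $\hat{A}_{(3)}$). Then $\hat{\beta}_{(3)} = (3,0,2)$ is a hole of $S$: namely $(3,0,2) \notin S$, and for every $s \in S$ with $s \ne 0$ one has $(3,0,2) + s \in S$. -/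
/-!
A point of the closure of finitely many vectors is an `ℕ`-combination of them. For `(3,0,2)` the
middle coordinate rules out the generators `(2,1,·)`, and the first coordinate then allows at most
one generator with first entry `2`; none of those has third entry `2`. Since
`β + (g + t) = (β + g) + t`, the hole condition only has to be checked on the generators `g`.
-/

namespace AddSubmonoid

variable {M : Type*} [AddMonoid M]

def IsHole (S : AddSubmonoid M) (β : M) : Prop :=
  β ∉ S ∧ ∀ s ∈ S, s ≠ 0 → β + s ∈ S

variable {T : Set M} {β : M}

theorem add_mem_closure_of_forall_add_mem (h : ∀ g ∈ T, β + g ∈ closure T) {s : M}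
    (hs : s ∈ closure T) (hs₀ : s ≠ 0) : β + s ∈ closure T := by
  induction hs using closure_induction with
  | mem g hg => exact h g hg
  | zero => exact absurd rfl hs₀
  | add x y _ hy ihx ihy =>
    by_cases hx₀ : x = 0
    · subst hx₀
      rw [zero_add] at hs₀ ⊢
      exact ihy hs₀
    · rw [← add_assoc]
      exact add_mem (ihx hx₀) hy

theorem isHole_closure (hβ : β ∉ closure T) (h : ∀ g ∈ T, β + g ∈ closure T) :
    (closure T).IsHole β :=
  ⟨hβ, fun _ hs hs₀ => add_mem_closure_of_forall_add_mem h hs hs₀⟩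

end AddSubmonoid

def hatA3 : Fin 7 → ℤ × ℤ × ℤ :=
  ![(1, 0, 0), (2, 0, 0), (2, 0, 1), (2, 0, 3), (2, 0, 4), (2, 1, 0), (2, 1, 1)]

theorem range_hatA3 : Set.range hatA3 =
    {(1, 0, 0), (2, 0, 0), (2, 0, 1), (2, 0, 3), (2, 0, 4), (2, 1, 0), (2, 1, 1)} := by
  simp only [hatA3, Matrix.range_cons, Matrix.range_empty, Set.union_empty, Set.singleton_union]

theorem mem_closure_hatA3_iff {a b c : ℤ} :
    (a, b, c) ∈ AddSubmonoid.closure (Set.range hatA3) ↔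
      ∃ n : Fin 7 → ℕ, a = n 0 + 2 * (n 1 + n 2 + n 3 + n 4 + n 5 + n 6) ∧
        b = n 5 + n 6 ∧ c = n 2 + 3 * n 3 + 4 * n 4 + n 6 := by
  rw [AddSubmonoid.mem_closure_range_iff_of_fintype]
  refine exists_congr fun n => ?_
  simp only [hatA3, nsmul_eq_mul, Fin.sum_univ_seven, Fin.isValue, Matrix.cons_val_zero,
    Matrix.cons_val_one, Matrix.cons_val, Prod.ext_iff, Prod.fst_add, Prod.fst_mul,
    Prod.fst_natCast, mul_one, Prod.snd_add, Prod.snd_mul, Prod.snd_natCast, mul_zero, add_zero,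
    zero_add]
  grind

theorem three_zero_two_notMem_closure_hatA3 :
    ((3, 0, 2) : ℤ × ℤ × ℤ) ∉ AddSubmonoid.closure (Set.range hatA3) := by
  rw [mem_closure_hatA3_iff]
  rintro ⟨n, ha, hb, hc⟩
  lia

theorem three_zero_two_add_hatA3_mem_closure (i : Fin 7) :
    ((3, 0, 2) : ℤ × ℤ × ℤ) + hatA3 i ∈ AddSubmonoid.closure (Set.range hatA3) := by
  rw [AddSubmonoid.mem_closure_range_iff_of_fintype]
  fin_cases i
  · exact ⟨![0, 0, 2, 0, 0, 0, 0], by decide⟩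
  · exact ⟨![1, 0, 2, 0, 0, 0, 0], by decide⟩
  · exact ⟨![1, 1, 0, 1, 0, 0, 0], by decide⟩
  · exact ⟨![1, 0, 1, 0, 1, 0, 0], by decide⟩
  · exact ⟨![1, 0, 0, 2, 0, 0, 0], by decide⟩
  · exact ⟨![1, 0, 1, 0, 0, 0, 1], by decide⟩
  · exact ⟨![1, 0, 0, 1, 0, 1, 0], by decide⟩

/-- `(3,0,2)` is a hole of the submonoid of `ℤ³` generated by the columns of `Â₍₃₎`,
namely `(1,0,0), (2,0,0), (2,0,1), (2,0,3), (2,0,4), (2,1,0), (2,1,1)`. -/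
theorem beta_hat_three_is_hole :
    let S : AddSubmonoid (ℤ × ℤ × ℤ) :=
      AddSubmonoid.closure
        {(1, 0, 0), (2, 0, 0), (2, 0, 1), (2, 0, 3), (2, 0, 4), (2, 1, 0), (2, 1, 1)}
    ((3, 0, 2) : ℤ × ℤ × ℤ) ∉ S ∧
      ∀ s ∈ S, s ≠ 0 → ((3, 0, 2) : ℤ × ℤ × ℤ) + s ∈ S := by
  have hole : (AddSubmonoid.closure (Set.range hatA3)).IsHole (3, 0, 2) :=
    AddSubmonoid.isHole_closure three_zero_two_notMem_closure_hatA3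
      (Set.forall_mem_range.2 three_zero_two_add_hatA3_mem_closure)
  rwa [range_hatA3] at hole
end

section
/- For the matrix $\hat{A}_{(3)}$ with columns $(1,0,0), (2,0,0), (2,0,1), (2,0,3), (2,0,4), (2,1,0), (2,1,1)$: the additive subgroup of $\mathbb{Z}^3$ generated by these columns is all of $\mathbb{Z}^3$, and the $3$-dimensional Lebesgue measure of the convex hull in $\mathbb{R}^3$ of the origin together with these seven points equals $5/3$; consequently the normalized volume $\operatorname{vol}_{\mathbb{Z}\hat{A}_{(3)}}(\hat{A}_{(3)}) = 3! \cdot (5/3) / 1 = 10$. -/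
/-!
The columns generate `ℤ³` because `(1,0,0)`, `(2,1,0) - (2,0,0)` and `(2,0,1) - (2,0,0)` are the
unit vectors.

The columns `(1,0,0)`, `(2,0,1)`, `(2,0,3)` lie on edges of the pyramid with apex `0` over the
quadrilateral `(2,0,0), (2,0,4), (2,1,0), (2,1,1)`, so `Δ` is that pyramid. The plane through
`0, (2,0,0), (2,1,1)`, where the last two coordinates agree, cuts it into two simplices meeting in
a null set. A simplex `conv {0, v₁, …, vₙ}` is the image of the corner simplex
`{x ≥ 0, ∑ xᵢ ≤ 1}`, of volume `1/n!` by slicing, under the matrix with columns `vᵢ`; so it has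
volume `|det (vᵢ)| / n!`, and here `Δ` has volume `2/3! + 8/3! = 5/3`.
-/

open MeasureTheory Set
open scoped Nat

/-- The normalized volume of an integer matrix `A`: `d! · λ_d(Δ_A) / [ℤ^d : ℤA]`. -/
noncomputable def normVol {ι κ : Type*} [Fintype ι] [Fintype κ] (A : Matrix ι κ ℤ) : ℝ :=
  (Nat.factorial (Fintype.card ι) : ℝ) *
    (volume (convexHull ℝ
      (insert (0 : ι → ℝ) (Set.range fun j i => (A i j : ℝ))))).toReal /
    ((AddSubgroup.closure (Set.range fun j i => A i j) : AddSubgroup (ι → ℤ)).index : ℝ)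

def cornerSimplex (n : ℕ) (c : ℝ) : Set (Fin n → ℝ) :=
  {x | (∀ i, 0 ≤ x i) ∧ ∑ i, x i ≤ c}

lemma cornerSimplex_eq_empty (n : ℕ) {c : ℝ} (hc : c < 0) : cornerSimplex n c = ∅ :=
  eq_empty_of_forall_notMem fun _ hx =>
    (Finset.sum_nonneg fun i _ => hx.1 i).not_gt (hx.2.trans_lt hc)

lemma cornerSimplex_succ (n : ℕ) (c : ℝ) :
    cornerSimplex (n + 1) c = MeasurableEquiv.piFinSuccAbove (fun _ => ℝ) 0 ⁻¹'
      {p | 0 ≤ p.1 ∧ p.2 ∈ cornerSimplex n (c - p.1)} := by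
  ext x
  simp [cornerSimplex, Fin.forall_fin_succ, Fin.sum_univ_succ, le_sub_iff_add_le', and_assoc,
    Fin.tail]

lemma convex_cornerSimplex (n : ℕ) (c : ℝ) : Convex ℝ (cornerSimplex n c) := by
  rintro x ⟨hx0, hx⟩ y ⟨hy0, hy⟩ a b ha hb hab
  refine ⟨fun i => add_nonneg (smul_nonneg ha (hx0 i)) (smul_nonneg hb (hy0 i)), ?_⟩
  simp only [Pi.add_apply, Pi.smul_apply, smul_eq_mul, Finset.sum_add_distrib, ← Finset.mul_sum]
  linear_combination mul_le_mul_of_nonneg_left hx ha + mul_le_mul_of_nonneg_left hy hb + c * hab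

lemma integral_sub_pow_div_factorial (n : ℕ) (c : ℝ) :
    ∫ x in (0 : ℝ)..c, (c - x) ^ n / n ! = c ^ (n + 1) / (n + 1)! := by
  rw [intervalIntegral.integral_div, intervalIntegral.integral_comp_sub_left (fun x => x ^ n),
    sub_self, sub_zero, integral_pow, Nat.factorial_succ]
  push_cast
  field_simp
  ring

theorem volume_cornerSimplex (n : ℕ) {c : ℝ} (hc : 0 ≤ c) :
    volume (cornerSimplex n c) = ENNReal.ofReal (c ^ n / n !) := by
  induction n generalizing c with
  | zero =>
    have : cornerSimplex 0 c = univ := by ext; simp [cornerSimplex, hc]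
    simp [this, volume_pi]
  | succ n ih =>
    set T : Set (ℝ × (Fin n → ℝ)) := {p | 0 ≤ p.1 ∧ p.2 ∈ cornerSimplex n (c - p.1)}
    have hT : MeasurableSet T := by
      simp only [T, cornerSimplex]
      measurability
    -- Slicing along the first coordinate `x` leaves `cornerSimplex n (c - x)`.
    have slice (x : ℝ) : volume (Prod.mk x ⁻¹' T) =
        (Icc 0 c).indicator (fun x => ENNReal.ofReal ((c - x) ^ n / n !)) x := by
      by_cases hx : x ∈ Icc 0 c
      · rw [indicator_of_mem hx, ← ih (sub_nonneg.2 hx.2)]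
        congr 1
        ext y
        simp [T, hx.1]
      · rw [indicator_of_notMem hx]
        refine (congrArg volume (eq_empty_of_forall_notMem ?_)).trans measure_empty
        rintro y ⟨hx0, hy⟩
        exact hx ⟨hx0, le_of_not_gt fun h => (cornerSimplex_eq_empty n (sub_neg.2 h)).subset hy⟩
    rw [cornerSimplex_succ, (volume_preserving_piFinSuccAbove (fun _ => ℝ) 0).measure_preimage
      hT.nullMeasurableSet, Measure.volume_eq_prod, Measure.prod_apply hT]
    simp_rw [slice]
    rw [lintegral_indicator measurableSet_Icc, ← ofReal_integral_eq_lintegral_ofReal,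
      integral_Icc_eq_integral_Ioc, ← intervalIntegral.integral_of_le hc,
      integral_sub_pow_div_factorial]
    · exact (by fun_prop : Continuous fun x : ℝ => (c - x) ^ n / n !).integrableOn_Icc
    · exact ae_restrict_of_forall_mem measurableSet_Icc fun x hx =>
        div_nonneg (pow_nonneg (sub_nonneg.2 hx.2) _) (Nat.cast_nonneg _)

lemma convexHull_insert_zero_single (n : ℕ) :
    convexHull ℝ (insert 0 (range fun i : Fin n => Pi.single i 1)) = cornerSimplex n 1 := by
  refine (convexHull_min ?_ (convex_cornerSimplex n 1)).antisymm fun x ⟨hx0, hx⟩ => ?_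
  · rintro _ (rfl | ⟨i, rfl⟩)
    · simp [cornerSimplex]
    · refine ⟨fun j => ?_, by simp⟩
      by_cases h : j = i <;> simp [h]
  · classical
    let w : Option (Fin n) → ℝ := fun o => o.elim (1 - ∑ i, x i) x
    let z : Option (Fin n) → Fin n → ℝ := fun o => o.elim 0 fun i => Pi.single i 1
    have hsum : x = ∑ o, w o • z o := by
      simpa [w, z, Fintype.sum_option] using pi_eq_sum_univ' x
    rw [hsum]
    refine (convex_convexHull ℝ _).sum_mem (fun o _ => ?_) ?_ fun o _ => subset_convexHull ℝ _ ?_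
    · cases o <;> simp [w, hx0, hx]
    · simp [w, Fintype.sum_option]
    · cases o <;> simp [z]

theorem volume_convexHull_insert_zero {n : ℕ} (v : Fin n → Fin n → ℝ) :
    volume (convexHull ℝ (insert 0 (range v))) = ENNReal.ofReal (|(Matrix.of v).det| / n !) := by
  classical
  set f := Matrix.toLin' (Matrix.of v).transpose
  have himage : f '' insert 0 (range fun i => Pi.single i 1) = insert 0 (range v) := by
    rw [image_insert_eq, map_zero, ← range_comp]
    congr 2
    ext i : 1
    simp [f, Matrix.toLin'_apply]
  rw [← himage, ← f.image_convexHull, Measure.addHaar_image_linearMap, LinearMap.det_toLin',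
    Matrix.det_transpose, convexHull_insert_zero_single, volume_cornerSimplex n zero_le_one,
    ← ENNReal.ofReal_mul (abs_nonneg _), one_pow, mul_one_div]

lemma convexHull_eq_of_subset_of_subset_convexHull {𝕜 E : Type*} [Semiring 𝕜] [PartialOrder 𝕜]
    [AddCommMonoid E] [Module 𝕜 E] {s t : Set E} (hts : t ⊆ s) (hst : s ⊆ convexHull 𝕜 t) :
    convexHull 𝕜 s = convexHull 𝕜 t :=
  (convexHull_min hst (convex_convexHull 𝕜 t)).antisymm (convexHull_mono hts)

section Convex

variable {𝕜 E : Type*} [Field 𝕜] [LinearOrder 𝕜] [IsStrictOrderedRing 𝕜] [AddCommGroup E]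
  [Module 𝕜 E]

lemma segment_eq_union_of_mem {p q m : E} (hm : m ∈ segment 𝕜 p q) :
    segment 𝕜 p q = segment 𝕜 p m ∪ segment 𝕜 m q := by
  rw [segment_eq_image_lineMap] at hm
  obtain ⟨t, ⟨ht0, ht1⟩, rfl⟩ := hm
  have h0 : AffineMap.lineMap p q (0 : 𝕜) = p := AffineMap.lineMap_apply_zero p q
  have h1 : AffineMap.lineMap p q (1 : 𝕜) = q := AffineMap.lineMap_apply_one p q
  calc segment 𝕜 p q = AffineMap.lineMap p q '' segment 𝕜 (0 : 𝕜) 1 := by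
        rw [image_segment, h0, h1]
    _ = AffineMap.lineMap p q '' (segment 𝕜 (0 : 𝕜) t ∪ segment 𝕜 t 1) := by
      rw [segment_eq_Icc ht0, segment_eq_Icc ht1, segment_eq_Icc zero_le_one,
        Icc_union_Icc_eq_Icc ht0 ht1]
    _ = _ := by rw [image_union, image_segment, image_segment, h0, h1]

lemma Convex.convexJoin_singleton_left_eq {s : Set E} (hs : Convex 𝕜 s) {m : E} (hm : m ∈ s) :
    convexJoin 𝕜 {m} s = s :=
  (convexJoin_subset (singleton_subset_iff.2 hm) Subset.rfl hs).antisymm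
    (subset_convexJoin_right (singleton_nonempty m))

-- Each point of `[p, q]` lies on `[p, m]` or on `[m, q]`, and `m` is absorbed by the hull of `s`.
lemma convexHull_insert_insert_eq_union {s : Set E} (hs : s.Nonempty) {p q m : E}
    (hm : m ∈ segment 𝕜 p q) (hms : m ∈ convexHull 𝕜 s) :
    convexHull 𝕜 (insert p (insert q s)) =
      convexHull 𝕜 (insert p s) ∪ convexHull 𝕜 (insert q s) := by
  have hK := (convex_convexHull 𝕜 s).convexJoin_singleton_left_eq hms
  rw [convexHull_insert (insert_nonempty q s), convexHull_insert hs, convexHull_insert hs,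
    ← convexJoin_assoc, convexJoin_singletons, segment_eq_union_of_mem hm, convexJoin_union_left,
    segment_symm 𝕜 m q, ← convexJoin_singletons, ← convexJoin_singletons,
    convexJoin_assoc, convexJoin_assoc, hK]

end Convex

lemma MeasureTheory.Measure.addHaar_union_of_subset_halfSpaces {E : Type*} [NormedAddCommGroup E]
    [NormedSpace ℝ E] [MeasurableSpace E] [BorelSpace E] [FiniteDimensional ℝ E] (μ : Measure E)
    [μ.IsAddHaarMeasure] {f : E →ₗ[ℝ] ℝ} (hf : f ≠ 0) {s t : Set E} (hs : s ⊆ {x | f x ≤ 0})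
    (ht : t ⊆ {x | 0 ≤ f x}) (htm : NullMeasurableSet t μ) : μ (s ∪ t) = μ s + μ t := by
  refine measure_union₀ htm (measure_mono_null (t := LinearMap.ker f) ?_ ?_)
  · exact fun x hx => le_antisymm (hs hx.1) (ht hx.2)
  · exact Measure.addHaar_submodule μ _ (mt LinearMap.ker_eq_top.1 hf)

lemma AddSubgroup.closure_eq_top_of_single_mem {ι : Type*} [Fintype ι] [DecidableEq ι]
    {s : Set (ι → ℤ)} (h : ∀ i, Pi.single i 1 ∈ closure s) : closure s = ⊤ :=
  eq_top_iff.2 fun x _ => pi_eq_sum_univ' x ▸ sum_mem fun i _ => zsmul_mem (h i) (x i)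

lemma closure_Ahat3_columns_eq_top :
    AddSubgroup.closure ({![1, 0, 0], ![2, 0, 0], ![2, 0, 1], ![2, 0, 3], ![2, 0, 4],
        ![2, 1, 0], ![2, 1, 1]} : Set (Fin 3 → ℤ)) = ⊤ := by
  set S : Set (Fin 3 → ℤ) := {![1, 0, 0], ![2, 0, 0], ![2, 0, 1], ![2, 0, 3], ![2, 0, 4],
    ![2, 1, 0], ![2, 1, 1]}
  have mem (v : Fin 3 → ℤ) (hv : v ∈ S) : v ∈ AddSubgroup.closure S :=
    AddSubgroup.subset_closure hv
  refine AddSubgroup.closure_eq_top_of_single_mem fun i => ?_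
  fin_cases i
  · convert mem ![1, 0, 0] (by simp [S]) using 1
    decide
  · convert sub_mem (mem ![2, 1, 0] (by simp [S])) (mem ![2, 0, 0] (by simp [S])) using 1
    decide
  · convert sub_mem (mem ![2, 0, 1] (by simp [S])) (mem ![2, 0, 0] (by simp [S])) using 1
    decide

lemma convexHull_Ahat3_eq_union :
    convexHull ℝ ({![0, 0, 0], ![1, 0, 0], ![2, 0, 0], ![2, 0, 1], ![2, 0, 3], ![2, 0, 4],
        ![2, 1, 0], ![2, 1, 1]} : Set (Fin 3 → ℝ)) =
      convexHull ℝ {![2, 1, 0], 0, ![2, 0, 0], ![2, 1, 1]} ∪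
        convexHull ℝ {![2, 0, 4], 0, ![2, 0, 0], ![2, 1, 1]} := by
  set T : Set (Fin 3 → ℝ) := {![2, 1, 0], ![2, 0, 4], 0, ![2, 0, 0], ![2, 1, 1]}
  have h0 : (0 : Fin 3 → ℝ) ∈ T := by simp [T]
  have hB : ![2, 0, 0] ∈ T := by simp [T]
  have hE : ![2, 0, 4] ∈ T := by simp [T]
  rw [show (![0, 0, 0] : Fin 3 → ℝ) = 0 by simp]
  have hsub : T ⊆ {0, ![1, 0, 0], ![2, 0, 0], ![2, 0, 1], ![2, 0, 3], ![2, 0, 4],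
      ![2, 1, 0], ![2, 1, 1]} := by
    simp [T, insert_subset_iff]
  have hhull : {0, ![1, 0, 0], ![2, 0, 0], ![2, 0, 1], ![2, 0, 3], ![2, 0, 4],
      ![2, 1, 0], ![2, 1, 1]} ⊆ convexHull ℝ T := by
    rintro x (rfl | rfl | rfl | rfl | rfl | rfl | rfl | rfl)
    · exact subset_convexHull ℝ T h0
    · exact segment_subset_convexHull h0 hB
        ⟨1 / 2, 1 / 2, by norm_num, by norm_num, by norm_num, by ext i; fin_cases i <;> norm_num⟩
    · exact subset_convexHull ℝ T hB
    · exact segment_subset_convexHull hB hE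
        ⟨3 / 4, 1 / 4, by norm_num, by norm_num, by norm_num, by ext i; fin_cases i <;> norm_num⟩
    · exact segment_subset_convexHull hB hE
        ⟨1 / 4, 3 / 4, by norm_num, by norm_num, by norm_num, by ext i; fin_cases i <;> norm_num⟩
    · exact subset_convexHull ℝ T hE
    · exact subset_convexHull ℝ T (by simp [T])
    · exact subset_convexHull ℝ T (by simp [T])
  rw [convexHull_eq_of_subset_of_subset_convexHull hsub hhull]
  -- The plane through `0, (2,0,0), (2,1,1)` cuts the edge `[(2,1,0), (2,0,4)]`.
  have hm : ![2, 4 / 5, 4 / 5] ∈ convexHull ℝ ({0, ![2, 0, 0], ![2, 1, 1]} : Set (Fin 3 → ℝ)) :=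
    segment_subset_convexHull (x := ![2, 0, 0]) (y := ![2, 1, 1]) (by simp) (by simp)
      ⟨1 / 5, 4 / 5, by norm_num, by norm_num, by norm_num, by ext i; fin_cases i <;> norm_num⟩
  exact convexHull_insert_insert_eq_union (by simp) ⟨4 / 5, 1 / 5, by norm_num, by norm_num,
    by norm_num, by ext i; fin_cases i <;> norm_num⟩ hm

lemma volume_convexHull_Ahat3_simplex (a b : ℝ) :
    volume (convexHull ℝ ({![2, a, b], 0, ![2, 0, 0], ![2, 1, 1]} : Set (Fin 3 → ℝ))) =
      ENNReal.ofReal (|b - a| / 3) := by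
  have hset : ({![2, a, b], 0, ![2, 0, 0], ![2, 1, 1]} : Set (Fin 3 → ℝ)) =
      insert 0 (range ![![2, 0, 0], ![2, 1, 1], ![2, a, b]]) := by
    ext x
    simp only [Matrix.range_cons, Matrix.range_empty, union_empty, singleton_union,
      mem_insert_iff, mem_singleton_iff]
    tauto
  have hdet : (Matrix.of ![![2, 0, 0], ![2, 1, 1], ![2, a, b]]).det = 2 * (b - a) := by
    simp [Matrix.det_fin_three]
    ring
  rw [hset, volume_convexHull_insert_zero, hdet, abs_mul, abs_two]
  congr 1
  norm_num [Nat.factorial]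
  ring

lemma volume_convexHull_Ahat3 :
    volume (convexHull ℝ ({![0, 0, 0], ![1, 0, 0], ![2, 0, 0], ![2, 0, 1], ![2, 0, 3],
        ![2, 0, 4], ![2, 1, 0], ![2, 1, 1]} : Set (Fin 3 → ℝ))) = 5 / 3 := by
  let f : (Fin 3 → ℝ) →ₗ[ℝ] ℝ := (LinearMap.proj 2 : (Fin 3 → ℝ) →ₗ[ℝ] ℝ) - LinearMap.proj 1
  have hf : f ≠ 0 := fun h => by simpa [f] using LinearMap.congr_fun h (Pi.single 2 1)
  have h₁ : convexHull ℝ {![2, 1, 0], 0, ![2, 0, 0], ![2, 1, 1]} ⊆ {x | f x ≤ 0} :=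
    convexHull_min (by simp [insert_subset_iff, f]) (convex_halfSpace_le f.isLinear 0)
  have h₂ : convexHull ℝ {![2, 0, 4], 0, ![2, 0, 0], ![2, 1, 1]} ⊆ {x | 0 ≤ f x} :=
    convexHull_min (by simp [insert_subset_iff, f]) (convex_halfSpace_ge f.isLinear 0)
  rw [convexHull_Ahat3_eq_union, Measure.addHaar_union_of_subset_halfSpaces volume hf h₁ h₂
    ((Set.toFinite _).isCompact_convexHull (𝕜 := ℝ)).measurableSet.nullMeasurableSet,
    volume_convexHull_Ahat3_simplex, volume_convexHull_Ahat3_simplex,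
    ← ENNReal.ofReal_add (by positivity) (by positivity)]
  norm_num [ENNReal.ofReal_div_of_pos]

def Ahat3 : Matrix (Fin 3) (Fin 7) ℤ :=
  Matrix.of !![1, 2, 2, 2, 2, 2, 2; 0, 0, 0, 0, 0, 1, 1; 0, 0, 1, 3, 4, 0, 1]

lemma Ahat3_columns : (fun j i => Ahat3 i j) =
    ![![1, 0, 0], ![2, 0, 0], ![2, 0, 1], ![2, 0, 3], ![2, 0, 4], ![2, 1, 0], ![2, 1, 1]] := by
  ext j i
  fin_cases j <;> fin_cases i <;> rfl

lemma range_Ahat3_columns : range (fun j i => Ahat3 i j) =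
    {![1, 0, 0], ![2, 0, 0], ![2, 0, 1], ![2, 0, 3], ![2, 0, 4], ![2, 1, 0], ![2, 1, 1]} := by
  rw [Ahat3_columns]
  simp only [Matrix.range_cons, Matrix.range_empty, union_empty, singleton_union]

lemma insert_zero_range_Ahat3_columns_real : insert 0 (range fun j i => (Ahat3 i j : ℝ)) =
    {![0, 0, 0], ![1, 0, 0], ![2, 0, 0], ![2, 0, 1], ![2, 0, 3], ![2, 0, 4], ![2, 1, 0],
      ![2, 1, 1]} := by
  have hcols : (fun j i => (Ahat3 i j : ℝ)) =
      ![![1, 0, 0], ![2, 0, 0], ![2, 0, 1], ![2, 0, 3], ![2, 0, 4], ![2, 1, 0], ![2, 1, 1]] := by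
    ext j i
    rw [show (Ahat3 i j : ℝ) = ((fun j i => Ahat3 i j) j i : ℤ) from rfl, Ahat3_columns]
    fin_cases j <;> fin_cases i <;> simp
  rw [hcols]
  simp only [Matrix.range_cons, Matrix.range_empty, union_empty, singleton_union,
    ← Matrix.zero_empty, Matrix.cons_zero_zero]

lemma normVol_Ahat3 : normVol Ahat3 = 10 := by
  rw [normVol, range_Ahat3_columns, closure_Ahat3_columns_eq_top, AddSubgroup.index_top,
    insert_zero_range_Ahat3_columns_real, volume_convexHull_Ahat3]
  norm_num [Nat.factorial]

/-- For `Â₍₃₎` with columns `(1,0,0), (2,0,0), (2,0,1), (2,0,3), (2,0,4), (2,1,0), (2,1,1)`: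
the columns generate `ℤ³` as a group, the convex hull of the origin and the columns has
volume `5/3`, and the normalized volume is `3! · (5/3) / 1 = 10`. -/
theorem normVol_A_hat_three :
    (AddSubgroup.closure ({![1, 0, 0], ![2, 0, 0], ![2, 0, 1], ![2, 0, 3], ![2, 0, 4],
        ![2, 1, 0], ![2, 1, 1]} : Set (Fin 3 → ℤ)) = ⊤) ∧
    volume (convexHull ℝ ({![0, 0, 0], ![1, 0, 0], ![2, 0, 0], ![2, 0, 1], ![2, 0, 3],
        ![2, 0, 4], ![2, 1, 0], ![2, 1, 1]} : Set (Fin 3 → ℝ))) = 5 / 3 ∧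
    normVol (Matrix.of !![1, 2, 2, 2, 2, 2, 2; 0, 0, 0, 0, 0, 1, 1; 0, 0, 1, 3, 4, 0, 1])
      = 10 :=
  ⟨closure_Ahat3_columns_eq_top, volume_convexHull_Ahat3, normVol_Ahat3⟩
end
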